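/- Let Ω ⊂ ℝ^q be bounded with |Ω| > 0 and ω a nonnegative integrable weight. Fix d ∈ ℕ₀ and let N₀ be such that X_{N₀} = {x_n}_{n=1}^{N₀} ⊂ Ω is ℙ_d(ℝ^q)-unisolvent with ω(x_n) > 0 for n ≤ N₀. For N > N₀ set X_N = X_{N₀} ∪ {x_n}_{n=N₀+1}^N and r_n = ω(x_n)|Ω|/N, and assume (|Ω|/N) Σ_{n=1}^N u(x_n) v(x_n) ω(x_n) → ∫_Ω u v ω dx for all u, v ∈ ℙ_d(ℝ^q). Then there exists N₁ ≥ N₀ such that for all N ≥ N₁, all weights w_n^{LS} = r_n Σ_{k=1}^K π_k(x_n; r) I[π_k(·; r)] of the least-squares cubature formula with degree of exactness d are nonnegative. -/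

import Mathlib

/-!
The weight at `x_n` is `r_n p_N(x_n)`, where `p_N = ∑_k I[π_k] π_k` represents the functional
`I` in the discrete inner product. In the fixed basis `e = π(·; r)` at level `N₀`, the coordinates
of `p_N` are `G_N⁻¹ b`, where `G_N` is the discrete Gram matrix of `e` and `b = I[e]`, and this
does not depend on which orthonormal basis is used. By assumption `G_N` tends to the continuous
Gram matrix `G`, whose inverse maps `b` to the coordinates of the constant `1`. Unless `ω = 0`
a.e. on `Ω` (when every weight is `0`), `G` is invertible, because a nonzero polynomial vanishes
only on a null set. Hence `p_N → 1` uniformly on the bounded set `Ω`, so `p_N > 0` on `Ω` for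
large `N`.
-/

open MvPolynomial MeasureTheory Filter

open Matrix

theorem MvPolynomial.volume_setOf_eval_eq_zero {q : ℕ} {f : MvPolynomial (Fin q) ℝ} (hf : f ≠ 0) :
    volume {y : Fin q → ℝ | eval y f = 0} = 0 := by
  induction q with
  | zero =>
    obtain ⟨c, rfl⟩ := C_surjective (Fin 0) f
    have hc : c ≠ 0 := by rintro rfl; exact hf C_0
    simp [hc]
  | succ q ih =>
    set F := finSuccEquiv ℝ q f
    have hF : F.leadingCoeff ≠ 0 := by
      simpa [F, Polynomial.leadingCoeff_ne_zero] using hf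
    have hmeas : MeasurableSet {y : Fin (q + 1) → ℝ | eval y f = 0} :=
      (continuous_eval f).measurable (measurableSet_singleton 0)
    let e := MeasurableEquiv.piFinSuccAbove (fun _ : Fin (q + 1) => ℝ) 0
    have he : ∀ p, e.symm p = Fin.cons p.1 p.2 := fun p => by
      simp [e, MeasurableEquiv.piFinSuccAbove, Fin.insertNthEquiv]
    rw [← ((volume_preserving_piFinSuccAbove (fun _ : Fin (q + 1) => ℝ) 0).symm
        e).measure_preimage_equiv,
      show (volume : Measure (ℝ × (Fin q → ℝ))) = volume.prod volume from rfl,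
      Measure.prod_apply_symm (e.symm.measurable hmeas)]
    refine (lintegral_congr_ae ?_).trans lintegral_zero
    have hlead : ∀ᵐ z : Fin q → ℝ, eval z F.leadingCoeff ≠ 0 := by
      simpa [ae_iff] using ih hF
    filter_upwards [hlead] with z hz
    have hz' : Polynomial.map (eval z) F ≠ 0 := fun h => hz (by
      simpa [Polynomial.coeff_map] using congrArg (Polynomial.coeff · F.natDegree) h)
    simp only [Set.preimage_ofPred_eq, he, eval_eq_eval_mv_eval']
    exact (Polynomial.finite_setOfPred_isRoot hz').measure_zero volume

theorem Matrix.abs_dotProduct_le {ι : Type*} [Fintype ι] (a w : ι → ℝ) :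
    |a ⬝ᵥ w| ≤ Fintype.card ι * (‖a‖ * ‖w‖) := calc
  |a ⬝ᵥ w| ≤ ∑ j, |a j * w j| := Finset.abs_sum_le_sum_abs _ _
  _ ≤ ∑ _j : ι, ‖a‖ * ‖w‖ := Finset.sum_le_sum fun j _ => by
    rw [abs_mul]
    exact mul_le_mul (norm_le_pi_norm a j) (norm_le_pi_norm w j) (abs_nonneg _) (norm_nonneg _)
  _ = Fintype.card ι * (‖a‖ * ‖w‖) := by simp

theorem Matrix.eventually_forall_pos_dotProduct {α β ι : Type*} [Fintype ι] {l : Filter β}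
    {v : β → ι → ℝ} {c : ι → ℝ} (hv : Tendsto v l (nhds c)) {S : Set α} {E : α → ι → ℝ}
    {C : ℝ} (hE : ∀ y ∈ S, ‖E y‖ ≤ C) (hc : ∀ y ∈ S, E y ⬝ᵥ c = 1) :
    ∀ᶠ b in l, ∀ y ∈ S, 0 < E y ⬝ᵥ v b := by
  have hsmall : ∀ᶠ b in l, Fintype.card ι * (C * ‖v b - c‖) < 1 := by
    have h := ((tendsto_iff_norm_sub_tendsto_zero.mp hv).const_mul C).const_mul
      (Fintype.card ι : ℝ)
    rw [mul_zero, mul_zero] at h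
    exact h.eventually (gt_mem_nhds one_pos)
  filter_upwards [hsmall] with b hb y hy
  have h := Matrix.abs_dotProduct_le (E y) (v b - c)
  rw [dotProduct_sub, hc y hy] at h
  have : Fintype.card ι * (‖E y‖ * ‖v b - c‖) ≤ Fintype.card ι * (C * ‖v b - c‖) := by
    gcongr
    exact hE y hy
  linarith [(abs_le.mp h).1]

theorem Matrix.inv_eq_of_mul_mul_eq_one {n R : Type*} [Fintype n] [DecidableEq n] [CommRing R]
    {A G B : Matrix n n R} (h : A * G * B = 1) : G⁻¹ = B * A := by
  rw [mul_assoc, mul_eq_one_comm, mul_assoc] at h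
  exact Matrix.inv_eq_right_inv h

theorem Matrix.tendsto_inv_mulVec_mulVec {n R β : Type*} [Fintype n] [DecidableEq n] [Field R]
    [TopologicalSpace R] [IsTopologicalDivisionRing R] {l : Filter β} {Gs : β → Matrix n n R}
    {G : Matrix n n R} (hG : Tendsto Gs l (nhds G)) (hdet : G.det ≠ 0) (c : n → R) :
    Tendsto (fun b => (Gs b)⁻¹ *ᵥ (G *ᵥ c)) l (nhds c) := by
  have hinv : ContinuousAt Inv.inv G :=
    continuousAt_matrix_inv G (by simpa [Ring.inverse_eq_inv'] using continuousAt_inv₀ hdet)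
  have hmul : Continuous fun M : Matrix n n R => M *ᵥ (G *ᵥ c) :=
    continuous_id.matrix_mulVec continuous_const
  have hc : G⁻¹ *ᵥ (G *ᵥ c) = c := by
    rw [Matrix.mulVec_mulVec, Matrix.nonsing_inv_mul G (Ne.isUnit hdet), Matrix.one_mulVec]
  have h := (hmul.continuousAt.comp hinv).tendsto.comp hG
  rwa [Function.comp_apply, hc] at h

namespace LinearMap.BilinForm

variable {V ι : Type*} [AddCommGroup V] [Module ℝ V] {B : LinearMap.BilinForm ℝ V} {e : ι → V}

def gram (B : LinearMap.BilinForm ℝ V) (e : ι → V) : Matrix ι ι ℝ :=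
  Matrix.of fun i j => B (e i) (e j)

theorem linearIndependent_of_gram_eq_one [DecidableEq ι] (h : gram B e = 1) :
    LinearIndependent ℝ e := by
  have hB : ∀ i j, B (e i) (e j) = (1 : Matrix ι ι ℝ) i j := fun i j => congrFun₂ h i j
  refine linearIndependent_of_iIsOrtho (B := B) (iIsOrtho_def.mpr fun i j hij => ?_) fun i => ?_
  · rw [hB, one_apply_ne hij]
  · simp [hB]

variable [Fintype ι]

theorem gram_mulVec (c : ι → ℝ) : gram B e *ᵥ c = fun i => B (e i) (∑ j, c j • e j) := by
  ext i
  simp [gram, mulVec, dotProduct, mul_comm]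

theorem apply_sum_smul_sum_smul (a b : ι → ℝ) :
    B (∑ i, a i • e i) (∑ j, b j • e j) = a ⬝ᵥ (gram B e *ᵥ b) := by
  rw [gram_mulVec]
  simp only [dotProduct, sum_left, smul_left]

theorem gram_sum_smul (A : Matrix ι ι ℝ) :
    gram B (fun k => ∑ j, A k j • e j) = A * gram B e * Aᵀ := by
  ext k l
  simp only [gram, of_apply, apply_sum_smul_sum_smul, dotProduct, mulVec, mul_apply,
    transpose_apply, Finset.mul_sum, Finset.sum_mul]
  rw [Finset.sum_comm]
  simp only [mul_comm, mul_left_comm]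

variable [DecidableEq ι]

theorem det_gram_ne_zero (he : LinearIndependent ℝ e) (hB : ∀ v, B v v = 0 → v = 0) :
    (gram B e).det ≠ 0 := by
  intro hdet
  obtain ⟨a, ha, hGa⟩ := exists_mulVec_eq_zero_iff.mpr hdet
  have hBa : B (∑ i, a i • e i) (∑ i, a i • e i) = 0 := by
    rw [apply_sum_smul_sum_smul, hGa, dotProduct_zero]
  exact ha (funext (Fintype.linearIndependent_iff.mp he a (hB _ hBa)))

theorem sum_apply_mul_apply_of_gram_eq_one {π : ι → V}
    (hπ : ∀ k, π k ∈ Submodule.span ℝ (Set.range e)) (hπB : gram B π = 1) (ℓ I : V →ₗ[ℝ] ℝ) :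
    ∑ k, ℓ (π k) * I (π k) = (fun j => ℓ (e j)) ⬝ᵥ ((gram B e)⁻¹ *ᵥ fun j => I (e j)) := by
  obtain ⟨A, hπA⟩ : ∃ A : Matrix ι ι ℝ, π = fun k => ∑ j, A k j • e j := by
    choose A hA using fun k => (Submodule.mem_span_range_iff_exists_fun ℝ).mp (hπ k)
    exact ⟨A, funext fun k => (hA k).symm⟩
  have hinv : (gram B e)⁻¹ = Aᵀ * A :=
    inv_eq_of_mul_mul_eq_one (by rw [← gram_sum_smul, ← hπA, hπB])
  have hcoord : ∀ (f : V →ₗ[ℝ] ℝ) k, f (π k) = (A *ᵥ fun j => f (e j)) k := fun f k => by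
    simp [hπA, mulVec, dotProduct]
  simp only [hcoord]
  change (A *ᵥ _) ⬝ᵥ (A *ᵥ _) = _
  rw [hinv, ← mulVec_mulVec, dotProduct_mulVec _ Aᵀ, vecMul_transpose]

end LinearMap.BilinForm

namespace MvPolynomial

variable {σ : Type*}

noncomputable def discreteForm {ι : Type*} [Fintype ι] (r : ι → ℝ) (x : ι → σ → ℝ) :
    LinearMap.BilinForm ℝ (MvPolynomial σ ℝ) :=
  LinearMap.mk₂ ℝ (fun f g => ∑ n, r n * eval (x n) f * eval (x n) g)
    (fun f f' g => by simp only [map_add, mul_add, add_mul, Finset.sum_add_distrib])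
    (fun c f g => by
      simp only [smul_eval, smul_eq_mul, Finset.mul_sum]
      exact Finset.sum_congr rfl fun n _ => by ring)
    (fun f g g' => by simp only [map_add, mul_add, Finset.sum_add_distrib])
    (fun c f g => by
      simp only [smul_eval, smul_eq_mul, Finset.mul_sum]
      exact Finset.sum_congr rfl fun n _ => by ring)

noncomputable def weightedForm (μ : Measure (σ → ℝ)) (ω : (σ → ℝ) → ℝ)
    (hint : ∀ f g : MvPolynomial σ ℝ, Integrable (fun y => eval y f * eval y g * ω y) μ) :
    LinearMap.BilinForm ℝ (MvPolynomial σ ℝ) :=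
  LinearMap.mk₂ ℝ (fun f g => ∫ y, eval y f * eval y g * ω y ∂μ)
    (fun f f' g => by simp only [map_add, add_mul, integral_add (hint f g) (hint f' g)])
    (fun c f g => by simp only [smul_eval, smul_eq_mul, mul_assoc, integral_const_mul])
    (fun f g g' => by simp only [map_add, mul_add, add_mul, integral_add (hint f g) (hint f g')])
    (fun c f g => by
      simp only [smul_eval, smul_eq_mul, mul_left_comm _ c, mul_assoc, integral_const_mul])

theorem eq_zero_of_weightedForm_self_eq_zero {q : ℕ} {Ω : Set (Fin q → ℝ)}
    (hΩ : MeasurableSet Ω) {ω : (Fin q → ℝ) → ℝ} (hω : ∀ y ∈ Ω, 0 ≤ ω y)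
    (hω0 : ¬ω =ᵐ[volume.restrict Ω] 0)
    (hint : ∀ f g : MvPolynomial (Fin q) ℝ,
      IntegrableOn (fun y => eval y f * eval y g * ω y) Ω volume)
    {f : MvPolynomial (Fin q) ℝ} (hf : weightedForm (volume.restrict Ω) ω hint f f = 0) :
    f = 0 := by
  by_contra hf0
  have hnn : 0 ≤ᵐ[volume.restrict Ω] fun y => eval y f * eval y f * ω y :=
    ae_restrict_of_forall_mem hΩ fun y hy => mul_nonneg (mul_self_nonneg _) (hω y hy)
  have hne : ∀ᵐ y ∂volume.restrict Ω, eval y f ≠ 0 :=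
    ae_restrict_of_ae (by simpa [ae_iff] using volume_setOf_eval_eq_zero hf0)
  refine hω0 ?_
  filter_upwards [(integral_eq_zero_iff_of_nonneg_ae hnn (hint f f)).mp hf, hne] with y hy hy'
  simpa [hy'] using hy

end MvPolynomial

theorem LS_weights_eventually_nonneg_general (q d K N₀ : ℕ)
    (Ω : Set (Fin q → ℝ)) (hΩ : MeasurableSet Ω)
    (hbdd : Bornology.IsBounded Ω)
    (ω : (Fin q → ℝ) → ℝ) (hω : ∀ y ∈ Ω, 0 ≤ ω y) (hωint : IntegrableOn ω Ω)
    (x : ℕ → (Fin q → ℝ)) (hx : ∀ n, x n ∈ Ω)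
    -- convergence of the discrete inner products (assumption (13) of Thm 1)
    (hconv : ∀ f ∈ restrictTotalDegree (Fin q) ℝ d,
      ∀ g ∈ restrictTotalDegree (Fin q) ℝ d,
      Tendsto (fun N : ℕ => ∑ n : Fin N,
          (ω (x n) * (MeasureTheory.volume Ω).toReal / N)
            * eval (x n) f * eval (x n) g)
        atTop (nhds (∫ y in Ω, eval y f * eval y g * ω y)))
    -- discrete orthonormal polynomial bases of ℙ_d(ℝ^q)
    (πN : ℕ → Fin K → MvPolynomial (Fin q) ℝ)
    (hπmem : ∀ N k, πN N k ∈ restrictTotalDegree (Fin q) ℝ d)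
    (hπspan : ∀ N ≥ N₀, ∀ f ∈ restrictTotalDegree (Fin q) ℝ d,
      f ∈ Submodule.span ℝ (Set.range (πN N)))
    (hπorth : ∀ N ≥ N₀, ∀ k l,
      (∑ n : Fin N, (ω (x n) * (MeasureTheory.volume Ω).toReal / N)
          * eval (x n) (πN N k) * eval (x n) (πN N l))
        = if k = l then 1 else 0) :
    ∃ N₁ ≥ N₀, ∀ N ≥ N₁, ∀ n : Fin N,
      0 ≤ (ω (x n) * (MeasureTheory.volume Ω).toReal / N)
            * ∑ k, eval (x n) (πN N k) * ∫ y in Ω, eval y (πN N k) * ω y := by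
  have hint (f g : MvPolynomial (Fin q) ℝ) :
      IntegrableOn (fun y => eval y f * eval y g * ω y) Ω :=
    hωint.continuousOn_mul_of_subset ((continuous_eval f).mul (continuous_eval g)).continuousOn
      hbdd.isCompact_closure hΩ subset_closure
  let B := weightedForm (volume.restrict Ω) ω hint
  let BN (N : ℕ) := discreteForm (fun n : Fin N => ω (x n) * (volume Ω).toReal / N) (x ·)
  let e := πN N₀
  have horth (N : ℕ) (hN : N ≥ N₀) : (BN N).gram (πN N) = 1 := by
    ext k l
    exact hπorth N hN k l
  have hweight (N : ℕ) (hN : N ≥ N₀) (y : Fin q → ℝ) :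
      ∑ k, eval y (πN N k) * ∫ z in Ω, eval z (πN N k) * ω z
        = (fun j => eval y (e j)) ⬝ᵥ (((BN N).gram e)⁻¹ *ᵥ fun j => B (e j) 1) := by
    have h := LinearMap.BilinForm.sum_apply_mul_apply_of_gram_eq_one
      (fun k => hπspan N₀ le_rfl _ (hπmem N k)) (horth N hN) (aeval y).toLinearMap (B.flip 1)
    simpa [B, weightedForm, coe_aeval_eq_eval] using h
  by_cases hdeg : ω =ᵐ[volume.restrict Ω] 0
  · refine ⟨N₀, le_rfl, fun N _ n => ?_⟩
    have hI (k : Fin K) : ∫ z in Ω, eval z (πN N k) * ω z = 0 :=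
      integral_eq_zero_of_ae (by filter_upwards [hdeg] with z hz; simp [hz])
    simp [hI]
  have hdet : (B.gram e).det ≠ 0 := LinearMap.BilinForm.det_gram_ne_zero
    (LinearMap.BilinForm.linearIndependent_of_gram_eq_one (horth N₀ le_rfl))
    fun _ => eq_zero_of_weightedForm_self_eq_zero hΩ hω hdeg hint
  obtain ⟨c, hc⟩ := (Submodule.mem_span_range_iff_exists_fun ℝ).mp
    (hπspan N₀ le_rfl 1 (by simp [mem_restrictTotalDegree]))
  have hcoef : Tendsto (fun N => ((BN N).gram e)⁻¹ *ᵥ fun j => B (e j) 1) atTop (nhds c) := by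
    have hgram : Tendsto (fun N => (BN N).gram e) atTop (nhds (B.gram e)) :=
      tendsto_pi_nhds.mpr fun i => tendsto_pi_nhds.mpr fun j =>
        hconv _ (hπmem N₀ i) _ (hπmem N₀ j)
    have h := tendsto_inv_mulVec_mulVec hgram hdet c
    rwa [LinearMap.BilinForm.gram_mulVec, hc] at h
  obtain ⟨C, hC⟩ := hbdd.isCompact_closure.exists_bound_of_continuousOn
    (continuous_pi fun j => continuous_eval (e j)).continuousOn
  have hpos := eventually_forall_pos_dotProduct hcoef (fun y hy => hC y (subset_closure hy))
    fun y _ => by simpa [dotProduct, smul_eval, mul_comm] using congrArg (eval y) hc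
  obtain ⟨N₁, hN₁⟩ := eventually_atTop.mp hpos
  refine ⟨max N₁ N₀, le_max_right _ _, fun N hN n => ?_⟩
  have hr := hω _ (hx n)
  rw [hweight N (le_of_max_le_right hN)]
  exact mul_nonneg (by positivity) (hN₁ N (le_of_max_le_left hN) _ (hx n)).le

/-- Theorem 1 (main result): for a fixed degree of exactness `d` and a growing
`ℙ_d(ℝ^q)`-unisolvent family of data points whose discrete inner products
converge to the continuous one, the least squares cubature weights
`w_n^{LS} = r_n ∑_k π_k(x_n; r) I[π_k(·; r)]` are all nonnegative for `N`
sufficiently large. -/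
theorem LS_weights_eventually_nonneg (q d K N₀ : ℕ)
    (hK : K = (d + q).choose q)
    (Ω : Set (Fin q → ℝ)) (hΩ : MeasurableSet Ω)
    (hbdd : Bornology.IsBounded Ω)
    (hvol : 0 < (MeasureTheory.volume Ω).toReal)
    (ω : (Fin q → ℝ) → ℝ) (hω : ∀ y ∈ Ω, 0 ≤ ω y) (hωint : IntegrableOn ω Ω)
    (x : ℕ → (Fin q → ℝ)) (hx : ∀ n, x n ∈ Ω)
    -- X_{N₀} is ℙ_d(ℝ^q)-unisolvent and ω is positive there
    (huni : ∀ f ∈ restrictTotalDegree (Fin q) ℝ d,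
      (∀ n < N₀, eval (x n) f = 0) → f = 0)
    (hωpos : ∀ n < N₀, 0 < ω (x n))
    -- convergence of the discrete inner products (assumption (13) of Thm 1)
    (hconv : ∀ f ∈ restrictTotalDegree (Fin q) ℝ d,
      ∀ g ∈ restrictTotalDegree (Fin q) ℝ d,
      Tendsto (fun N : ℕ => ∑ n : Fin N,
          (ω (x n) * (MeasureTheory.volume Ω).toReal / N)
            * eval (x n) f * eval (x n) g)
        atTop (nhds (∫ y in Ω, eval y f * eval y g * ω y)))
    -- discrete orthonormal polynomial bases of ℙ_d(ℝ^q)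
    (πN : ℕ → Fin K → MvPolynomial (Fin q) ℝ)
    (hπmem : ∀ N k, πN N k ∈ restrictTotalDegree (Fin q) ℝ d)
    (hπspan : ∀ N ≥ N₀, ∀ f ∈ restrictTotalDegree (Fin q) ℝ d,
      f ∈ Submodule.span ℝ (Set.range (πN N)))
    (hπorth : ∀ N ≥ N₀, ∀ k l,
      (∑ n : Fin N, (ω (x n) * (MeasureTheory.volume Ω).toReal / N)
          * eval (x n) (πN N k) * eval (x n) (πN N l))
        = if k = l then 1 else 0) :
    ∃ N₁ ≥ N₀, ∀ N ≥ N₁, ∀ n : Fin N,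
      0 ≤ (ω (x n) * (MeasureTheory.volume Ω).toReal / N)
            * ∑ k, eval (x n) (πN N k) * ∫ y in Ω, eval y (πN N k) * ω y :=
  LS_weights_eventually_nonneg_general q d K N₀ Ω hΩ hbdd ω hω hωint x hx hconv πN hπmem hπspan
    hπorth
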